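/- Let p(ξ) = g^{αβ} ξ_α ξ_β be a real quadratic form on R^{n+1} (ξ = (ξ_0, ξ')) with g^{00} = -1, such that for each fixed ξ' ≠ 0 the polynomial ξ_0 ↦ p(ξ_0, ξ') has two distinct real roots ξ_0^1(ξ') < ξ_0^2(ξ'). Let X(ξ) = X_0 ξ_0 + X_1(ξ') be affine in ξ_0 with X_0 ∈ R, and define e_X(ξ) := p(ξ) X_0 - 2 g^{0α} ξ_α X(ξ). Then e_X, as a quadratic polynomial in ξ_0, is positive definite (i.e. e_X(ξ_0,ξ') > 0 for all real ξ_0) if and only if X_0 > 0 and X(ξ_0^1, ξ') · X(ξ_0^2, ξ') < 0 with X(ξ_0^2,ξ') > 0 > X(ξ_0^1,ξ'). -/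

import Mathlib

noncomputable section

open scoped BigOperators

/-- The covector `ξ = (t, ξ')` obtained by prepending the time component `t` to `ξ'`. -/
def covec (n : ℕ) (ξ' : Fin n → ℝ) (t : ℝ) : Fin (n + 1) → ℝ :=
  Fin.cons t ξ'

/-- The quadratic form `p(ξ_0, ξ') = g^{αβ} ξ_α ξ_β` as a function of `ξ_0`. -/
def psym (n : ℕ) (g : Matrix (Fin (n + 1)) (Fin (n + 1)) ℝ) (ξ' : Fin n → ℝ) (t : ℝ) : ℝ :=
  ∑ α, ∑ β, g α β * covec n ξ' t α * covec n ξ' t β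

/-- The energy density `e_X(ξ) = p(ξ) X_0 - 2 g^{0α} ξ_α X(ξ)` with `X(ξ) = X_0 ξ_0 + X_1`. -/
def eX (n : ℕ) (g : Matrix (Fin (n + 1)) (Fin (n + 1)) ℝ) (ξ' : Fin n → ℝ)
    (X0 X1 t : ℝ) : ℝ :=
  psym n g ξ' t * X0 - 2 * (∑ α, g 0 α * covec n ξ' t α) * (X0 * t + X1)

/-!
With `g^{00} = -1` and roots `ξ_0^1 ≠ ξ_0^2`, Vieta gives `p = -(ξ_0 - ξ_0^1)(ξ_0 - ξ_0^2)` and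
`g^{0α} ξ_α = (ξ_0^1 + ξ_0^2)/2 - ξ_0`. So `e_X` is the quadratic in `ξ_0` with leading
coefficient `X_0` and values `∓(ξ_0^2 - ξ_0^1) X(ξ_0^i)` at the roots, that is
`(ξ_0^2 - ξ_0^1) e_X = X(ξ_0^2) (ξ_0 - ξ_0^1)^2 - X(ξ_0^1) (ξ_0 - ξ_0^2)^2`.
Two squares with distinct centres combine to an everywhere positive function iff both weights are
positive, and `X(ξ_0^1) < 0 < X(ξ_0^2)` forces the slope `X_0` to be positive.
-/

section

variable {n : ℕ} (ξ' : Fin n → ℝ) (t : ℝ)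

theorem sum_mul_covec (v : Fin (n + 1) → ℝ) :
    ∑ α, v α * covec n ξ' t α = v 0 * t + ∑ i, v i.succ * ξ' i := by
  simp only [covec, Fin.sum_univ_succ, Fin.cons_zero, Fin.cons_succ]

theorem psym_eq {g : Matrix (Fin (n + 1)) (Fin (n + 1)) ℝ} (hsym : g.IsSymm) :
    psym n g ξ' t = g 0 0 * t ^ 2 + 2 * (∑ i, g 0 i.succ * ξ' i) * t
      + ∑ i, ∑ j, g i.succ j.succ * ξ' i * ξ' j := by
  simp only [psym, covec, Fin.sum_univ_succ, Fin.cons_zero, Fin.cons_succ, hsym.apply _ 0,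
    Finset.sum_add_distrib]
  simp only [mul_assoc, mul_comm t, Finset.sum_mul]
  ring

end

theorem add_eq_and_mul_eq_of_roots {B C t1 t2 : ℝ} (h12 : t1 ≠ t2)
    (h1 : t1 ^ 2 + B * t1 + C = 0) (h2 : t2 ^ 2 + B * t2 + C = 0) :
    B = -(t1 + t2) ∧ C = t1 * t2 := by
  have hB : B = -(t1 + t2) := by
    have : (t1 - t2) * (t1 + t2 + B) = 0 := by linear_combination h1 - h2
    linarith [(mul_eq_zero.mp this).resolve_left (sub_ne_zero.mpr h12)]
  exact ⟨hB, by linear_combination h1 - t1 * hB⟩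

theorem forall_pos_mul_sq_add_mul_sq_iff {a b s1 s2 : ℝ} (h : s1 ≠ s2) :
    (∀ t, 0 < a * (t - s1) ^ 2 + b * (t - s2) ^ 2) ↔ 0 < a ∧ 0 < b := by
  have hsq12 : 0 < (s2 - s1) ^ 2 := by positivity [sub_ne_zero.mpr h.symm]
  have hsq21 : 0 < (s1 - s2) ^ 2 := by positivity [sub_ne_zero.mpr h]
  refine ⟨fun hpos => ⟨?_, ?_⟩, fun ⟨ha, hb⟩ t => ?_⟩
  · exact (mul_pos_iff_of_pos_right hsq12).mp (by simpa using hpos s2)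
  · exact (mul_pos_iff_of_pos_right hsq21).mp (by simpa using hpos s1)
  · rcases eq_or_ne t s1 with rfl | ht
    · simpa using mul_pos hb hsq21
    · have : 0 < (t - s1) ^ 2 := by positivity [sub_ne_zero.mpr ht]
      nlinarith [sq_nonneg (t - s2)]

theorem sub_mul_eX_eq {n : ℕ} {g : Matrix (Fin (n + 1)) (Fin (n + 1)) ℝ} (hsym : g.IsSymm)
    (hg00 : g 0 0 = -1) {ξ' : Fin n → ℝ} {t1 t2 : ℝ} (h12 : t1 ≠ t2)
    (hroot1 : psym n g ξ' t1 = 0) (hroot2 : psym n g ξ' t2 = 0) (X0 X1 t : ℝ) :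
    (t2 - t1) * eX n g ξ' X0 X1 t
      = (X0 * t2 + X1) * (t - t1) ^ 2 + (-(X0 * t1 + X1)) * (t - t2) ^ 2 := by
  set b := ∑ i, g 0 i.succ * ξ' i
  set c := ∑ i, ∑ j, g i.succ j.succ * ξ' i * ξ' j
  have hp : ∀ s, psym n g ξ' s = -(s ^ 2 + (-2 * b) * s + (-c)) := fun s => by
    rw [psym_eq ξ' s hsym, hg00]; ring
  obtain ⟨hb, hc⟩ := add_eq_and_mul_eq_of_roots h12
    (neg_eq_zero.mp (hp t1 ▸ hroot1)) (neg_eq_zero.mp (hp t2 ▸ hroot2))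
  rw [eX, hp, sum_mul_covec, hg00]
  linear_combination (t2 - t1) * X1 * hb - (t2 - t1) * X0 * hc

theorem timelike_symbol_characterization_general (n : ℕ)
    (g : Matrix (Fin (n + 1)) (Fin (n + 1)) ℝ) (hsym : g.IsSymm) (hg00 : g 0 0 = -1)
    (ξ' : Fin n → ℝ) (t1 t2 : ℝ) (h12 : t1 < t2)
    (hroot1 : psym n g ξ' t1 = 0) (hroot2 : psym n g ξ' t2 = 0)
    (X0 X1 : ℝ) :
    (∀ t : ℝ, 0 < eX n g ξ' X0 X1 t) ↔
      (0 < X0 ∧ (X0 * t1 + X1) * (X0 * t2 + X1) < 0 ∧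
        0 < X0 * t2 + X1 ∧ X0 * t1 + X1 < 0) := by
  have hpos : ∀ t, 0 < eX n g ξ' X0 X1 t ↔
      0 < (X0 * t2 + X1) * (t - t1) ^ 2 + (-(X0 * t1 + X1)) * (t - t2) ^ 2 := fun t => by
    rw [← sub_mul_eX_eq hsym hg00 h12.ne hroot1 hroot2, mul_pos_iff_of_pos_left (sub_pos.mpr h12)]
  simp_rw [hpos, forall_pos_mul_sq_add_mul_sq_iff h12.ne, neg_pos]
  constructor
  · rintro ⟨hX2, hX1⟩
    have hX0 : 0 < X0 * (t2 - t1) := by linarith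
    exact ⟨pos_of_mul_pos_left hX0 (sub_pos.mpr h12).le, mul_neg_of_neg_of_pos hX1 hX2, hX2, hX1⟩
  · rintro ⟨-, -, hX2, hX1⟩
    exact ⟨hX2, hX1⟩

/-- characterization of forward time-like multiplier symbols: with
`g^{00} = -1` and `ξ_0^1 < ξ_0^2` the two (distinct real) roots of `ξ_0 ↦ p(ξ_0, ξ')`,
the quadratic `e_X` in `ξ_0` is positive definite iff `X_0 > 0` and
`X(ξ_0^1) X(ξ_0^2) < 0` with `X(ξ_0^2) > 0 > X(ξ_0^1)`. -/
theorem timelike_symbol_characterization (n : ℕ)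
    (g : Matrix (Fin (n + 1)) (Fin (n + 1)) ℝ) (hsym : g.IsSymm) (hg00 : g 0 0 = -1)
    (ξ' : Fin n → ℝ) (hξ' : ξ' ≠ 0) (t1 t2 : ℝ) (h12 : t1 < t2)
    (hroot1 : psym n g ξ' t1 = 0) (hroot2 : psym n g ξ' t2 = 0)
    (X0 X1 : ℝ) :
    (∀ t : ℝ, 0 < eX n g ξ' X0 X1 t) ↔
      (0 < X0 ∧ (X0 * t1 + X1) * (X0 * t2 + X1) < 0 ∧
        0 < X0 * t2 + X1 ∧ X0 * t1 + X1 < 0) :=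
  timelike_symbol_characterization_general n g hsym hg00 ξ' t1 t2 h12 hroot1 hroot2 X0 X1
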